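/- Let Q > 0 and let w : ℝ → ℝ be an even smooth function supported in {u : Q ≤ |u| ≤ 2Q} with Σ_{q=1}^∞ w(q) = 1. Define Δ_q(u) = Σ_{r=1}^∞ (w(qr) − w(u/(qr)))/(qr). Then for every integer m, δ(m) = Σ_{q=1}^∞ Σ*_{d mod q} e(md/q) Δ_q(m), where δ(0) = 1 and δ(m) = 0 for m ≠ 0, the star indicates that d runs over residues modulo q coprime to q, and e(t) = e^{2πit}. -/

import Mathlib

open Real MeasureTheory

noncomputable section

/-- `e(t) = exp(2πit)`. -/
def e2pi (t : ℝ) : ℂ := Complex.exp (2 * Real.pi * Complex.I * t)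

/-- Kloosterman sum `S(m, n; q)`. -/
def kloosterman (m n : ℤ) (q : ℕ) : ℂ :=
  ∑ x ∈ (Finset.range q).filter (fun x => Nat.Coprime x q),
    e2pi ((((m * x + n * ((((x : ZMod q))⁻¹).val : ℤ)) : ℤ) : ℝ) / q)

/-- The divisor function `d(n)`. -/
def dd (n : ℕ) : ℕ := n.divisors.card

/-- The `k`-fold divisor function. -/
def dk : ℕ → ℕ → ℕ
  | 0, n => if n = 1 then 1 else 0
  | (k+1), n => ∑ m ∈ n.divisors, dk k (n / m)

/-- An admissible weight supported in `[X,2X] × [X,2X]`. -/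
def AdmissibleWeight (X : ℝ) (f : ℝ → ℝ → ℝ) : Prop :=
  ContDiff ℝ (⊤ : ℕ∞) (fun p : ℝ × ℝ => f p.1 p.2) ∧
  (∀ x y : ℝ, f x y ≠ 0 → x ∈ Set.Icc X (2*X) ∧ y ∈ Set.Icc X (2*X)) ∧
  ∀ (i j : ℕ) (x y : ℝ),
    |iteratedDeriv i (fun x' => iteratedDeriv j (fun y' => f x' y') y) x| ≤ X ^ (-(i:ℝ) - (j:ℝ))

def Hk (k : ℕ) : ℝ := ∑ j ∈ Finset.range k, 1/((j:ℝ)+1)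

def besselJ0 (z : ℝ) : ℝ := ∑' k : ℕ, (-1)^k * (z/2)^(2*k) / ((Nat.factorial k : ℝ))^2

def besselI0 (z : ℝ) : ℝ := ∑' k : ℕ, (z/2)^(2*k) / ((Nat.factorial k : ℝ))^2

def besselY0 (z : ℝ) : ℝ :=
  (2/Real.pi) * ((Real.log (z/2) + Real.eulerMascheroniConstant) * besselJ0 z
    + ∑' k : ℕ, (-1)^k * Hk (k+1) * (z/2)^(2*(k+1)) / ((Nat.factorial (k+1) : ℝ))^2)

def besselK0 (z : ℝ) : ℝ :=
  -(Real.log (z/2) + Real.eulerMascheroniConstant) * besselI0 z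
    + ∑' k : ℕ, Hk (k+1) * (z/2)^(2*(k+1)) / ((Nat.factorial (k+1) : ℝ))^2

def besselJn (ν : ℕ) (z : ℝ) : ℝ :=
  ∑' m : ℕ, (-1)^m * (z/2)^(2*m+ν) / ((Nat.factorial m : ℝ) * (Nat.factorial (m+ν) : ℝ))


/-- `Δ_q(u) = ∑_{r≥1} (w(qr) - w(u/(qr)))/(qr)`, for a real parameter `q`. -/
def DeltaFn (w : ℝ → ℝ) (q u : ℝ) : ℝ :=
  ∑' r : ℕ, (w (q * ((r:ℝ)+1)) - w (u / (q * ((r:ℝ)+1)))) / (q * ((r:ℝ)+1))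

lemma geom_full (m : ℤ) (c : ℕ) (hc : 0 < c) :
    ∑ x ∈ Finset.range c, e2pi (((m*x : ℤ):ℝ)/c) = if (c:ℤ) ∣ m then (c:ℂ) else 0 := by
  have hc0 : (c:ℝ) ≠ 0 := by positivity
  have hcC : (c:ℂ) ≠ 0 := by exact_mod_cast hc0
  set z : ℂ := e2pi ((m:ℝ)/c) with hz
  have hterm : ∀ x : ℕ, e2pi (((m*x : ℤ):ℝ)/c) = z ^ x := by
    intro x
    rw [hz]
    unfold e2pi
    rw [← Complex.exp_nat_mul]
    congr 1
    push_cast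
    ring
  have hzc : z ^ c = 1 := by
    rw [hz]
    unfold e2pi
    rw [← Complex.exp_nat_mul]
    have : (c:ℂ) * (2 * Real.pi * Complex.I * (((m:ℝ)/c : ℝ) : ℂ)) = (m:ℤ) * (2 * Real.pi * Complex.I) := by
      push_cast
      field_simp
    rw [this, Complex.exp_int_mul_two_pi_mul_I]
  have hz_iff : z = 1 ↔ (c:ℤ) ∣ m := by
    rw [hz]
    unfold e2pi
    rw [Complex.exp_eq_one_iff]
    constructor
    · rintro ⟨n, hn⟩
      have h2 : (2:ℂ) * Real.pi * Complex.I ≠ 0 := by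
        simp [Real.pi_ne_zero, Complex.I_ne_zero]
      have h3 : (m:ℂ) = (n:ℂ) * (c:ℂ) := by
        apply mul_left_cancel₀ h2
        push_cast at hn
        field_simp at hn
        linear_combination (2 * Real.pi * Complex.I) * hn
      have h4 : m = n * c := by exact_mod_cast h3
      exact ⟨n, by linarith [h4]⟩
    · rintro ⟨k, hk⟩
      refine ⟨k, ?_⟩
      subst hk
      push_cast
      field_simp
  simp_rw [hterm]
  by_cases hdvd : (c:ℤ) ∣ m
  · simp [hdvd, hz_iff.mpr hdvd]
  · have hzne : z ≠ 1 := fun h => hdvd (hz_iff.mp h)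
    rw [if_neg hdvd, geom_sum_eq hzne, hzc]
    simp

lemma partition_full (m : ℤ) (c : ℕ) (hc : 0 < c) :
    ∑ q ∈ c.divisors, ∑ x ∈ (Finset.range q).filter (fun x => Nat.Coprime x q),
        e2pi (((m*x : ℤ):ℝ)/q)
      = ∑ x ∈ Finset.range c, e2pi (((m*x : ℤ):ℝ)/c) := by
  have hcne : c ≠ 0 := hc.ne'
  rw [Finset.sum_sigma']
  refine Finset.sum_nbij' (fun p => p.2 * (c / p.1))
    (fun y => ⟨c / Nat.gcd y c, y / Nat.gcd y c⟩) ?_ ?_ ?_ ?_ ?_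
  · rintro ⟨q, x⟩ hp
    simp only [Finset.mem_sigma, Nat.mem_divisors, Finset.mem_filter, Finset.mem_range] at hp
    obtain ⟨⟨hqc, -⟩, hx, -⟩ := hp
    have hq0 : 0 < q := Nat.pos_of_ne_zero (fun h => by subst h; omega)
    have hcq : 0 < c / q := Nat.div_pos (Nat.le_of_dvd hc hqc) hq0
    simp only [Finset.mem_range]
    calc x * (c / q) < q * (c / q) := (Nat.mul_lt_mul_right hcq).mpr hx
      _ = c := Nat.mul_div_cancel' hqc
  · intro y hy
    simp only [Finset.mem_range] at hy
    have hy0 : y < c := hy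
    set g := Nat.gcd y c with hg
    have hgc : g ∣ c := Nat.gcd_dvd_right y c
    have hgy : g ∣ y := Nat.gcd_dvd_left y c
    have hgpos : 0 < g := Nat.gcd_pos_of_pos_right y hc
    simp only [Finset.mem_sigma, Nat.mem_divisors, Finset.mem_filter, Finset.mem_range]
    refine ⟨⟨Nat.div_dvd_of_dvd hgc, hcne⟩, ?_, ?_⟩
    · exact Nat.div_lt_div_of_lt_of_dvd hgc hy0
    · exact Nat.coprime_div_gcd_div_gcd hgpos
  · rintro ⟨q, x⟩ hp
    simp only [Finset.mem_sigma, Nat.mem_divisors, Finset.mem_filter, Finset.mem_range] at hp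
    obtain ⟨⟨hqc, -⟩, hx, hcop⟩ := hp
    have hq0 : 0 < q := Nat.pos_of_ne_zero (fun h => by subst h; omega)
    have hcq : 0 < c / q := Nat.div_pos (Nat.le_of_dvd hc hqc) hq0
    have hgcd : Nat.gcd (x * (c / q)) c = c / q := by
      have h := Nat.gcd_mul_right x (c/q) q
      rw [Nat.Coprime.gcd_eq_one hcop, one_mul, Nat.mul_div_cancel' hqc] at h
      exact h
    have h1 : c / Nat.gcd (x * (c / q)) c = q := by
      rw [hgcd, Nat.div_div_self hqc hcne]
    have h2 : x * (c / q) / Nat.gcd (x * (c / q)) c = x := by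
      rw [hgcd, Nat.mul_div_cancel x hcq]
    exact Sigma.ext h1 (heq_of_eq (show x * (c / q) / Nat.gcd (x * (c / q)) c = x from h2))
  · intro y hy
    simp only [Finset.mem_range] at hy
    have hgc : Nat.gcd y c ∣ c := Nat.gcd_dvd_right y c
    have hgy : Nat.gcd y c ∣ y := Nat.gcd_dvd_left y c
    show (y / Nat.gcd y c) * (c / (c / Nat.gcd y c)) = y
    rw [Nat.div_div_self hgc hcne, Nat.div_mul_cancel hgy]
  · rintro ⟨q, x⟩ hp
    simp only [Finset.mem_sigma, Nat.mem_divisors, Finset.mem_filter, Finset.mem_range] at hp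
    obtain ⟨⟨hqc, -⟩, hx, hcop⟩ := hp
    have hq0 : 0 < q := Nat.pos_of_ne_zero (fun h => by subst h; omega)
    congr 1
    have hq0' : (q:ℝ) ≠ 0 := by positivity
    have hc0' : (c:ℝ) ≠ 0 := by positivity
    have hcq : ((c / q : ℕ) : ℝ) = (c:ℝ) / q := by
      rw [Nat.cast_div hqc hq0']
    push_cast [hcq]
    field_simp
    have hcq' : (((c:ℤ) / (q:ℤ) : ℤ) : ℝ) = (c:ℝ) / q := by
      rw [← Int.natCast_div, Int.cast_natCast, hcq]
    rw [hcq']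
    field_simp

/-- the `δ`-method decomposition:
`δ(m) = ∑_{q≥1} ∑*_{d mod q} e(md/q) Δ_q(m)`. -/
theorem delta_method (Q : ℝ) (hQ : 0 < Q) (w : ℝ → ℝ)
    (hw : ContDiff ℝ (⊤ : ℕ∞) w) (heven : ∀ u, w (-u) = w u)
    (hsupp : ∀ u, w u ≠ 0 → Q ≤ |u| ∧ |u| ≤ 2 * Q)
    (hsum : ∑' q : ℕ, w q = 1) (m : ℤ) :
    (if m = 0 then (1:ℂ) else 0) =
      ∑' q : ℕ, (∑ x ∈ (Finset.range q).filter (fun x => Nat.Coprime x q),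
          e2pi ((((m * x : ℤ)) : ℝ) / q)) * ((DeltaFn w q m : ℝ) : ℂ) := by
  classical
  set M : ℝ := |(m:ℝ)| with hM
  have hM0 : 0 ≤ M := abs_nonneg _
  set N : ℕ := ⌈2*Q⌉₊ + ⌈(M+1)/Q⌉₊ with hNdef
  have hN1 : 2*Q ≤ (N:ℝ) := by
    calc 2*Q ≤ (⌈2*Q⌉₊ : ℝ) := Nat.le_ceil _
    _ ≤ (N:ℝ) := by exact_mod_cast Nat.le_add_right _ _
  have hN2 : M < (N:ℝ)*Q := by
    have h1 : (M+1)/Q ≤ (⌈(M+1)/Q⌉₊ : ℝ) := Nat.le_ceil _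
    have h2 : (⌈(M+1)/Q⌉₊:ℝ) ≤ (N:ℝ) := by exact_mod_cast Nat.le_add_left _ _
    have : (M+1)/Q ≤ (N:ℝ) := h1.trans h2
    have := (div_le_iff₀ hQ).mp this
    linarith
  have hNQ : 0 ≤ (N:ℝ) := Nat.cast_nonneg _
  -- vanishing
  have hvan : ∀ t : ℝ, (N:ℝ) < t → w t = 0 ∧ w ((m:ℝ)/t) = 0 := by
    intro t ht
    have ht0 : 0 < t := lt_of_le_of_lt hNQ ht
    constructor
    · by_contra h
      have h2 := (hsupp t h).2
      rw [abs_of_pos ht0] at h2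
      linarith
    · by_contra h
      have h1 := (hsupp _ h).1
      rw [abs_div, abs_of_pos ht0, ← hM] at h1
      have : Q * t ≤ M := (le_div_iff₀ ht0).mp h1
      nlinarith
  have hw0 : w 0 = 0 := by
    by_contra h
    have := (hsupp 0 h).1
    simp at this
    linarith
  -- Delta as finite sum
  set g : ℕ → ℝ := fun c => (w c - w ((m:ℝ)/c))/c with hg
  have hgvan : ∀ c : ℕ, N < c → g c = 0 := by
    intro c hc
    have : (N:ℝ) < (c:ℝ) := by exact_mod_cast hc
    obtain ⟨h1, h2⟩ := hvan c this
    simp [hg, h1, h2]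
  have hDelta : ∀ q : ℕ, 1 ≤ q →
      DeltaFn w q m = ∑ r ∈ Finset.range N, g (q*(r+1)) := by
    intro q hq
    have hterm : ∀ r : ℕ,
        (w ((q:ℝ) * ((r:ℝ)+1)) - w ((m:ℝ) / ((q:ℝ) * ((r:ℝ)+1)))) / ((q:ℝ) * ((r:ℝ)+1))
          = g (q*(r+1)) := by
      intro r
      simp only [hg]
      push_cast
      ring_nf
    unfold DeltaFn
    rw [tsum_eq_sum (s := Finset.range N)]
    · exact Finset.sum_congr rfl (fun r _ => hterm r)
    · intro r hr
      rw [hterm r]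
      apply hgvan
      have : r ≥ N := by simpa using hr
      calc N < r + 1 := by omega
        _ ≤ q * (r+1) := Nat.le_mul_of_pos_left _ hq
  -- coefficient
  set A : ℕ → ℂ := fun q => ∑ x ∈ (Finset.range q).filter (fun x => Nat.Coprime x q),
      e2pi ((((m * x : ℤ)) : ℝ) / q) with hA
  have hDeltavan : ∀ q : ℕ, N < q → DeltaFn w q m = 0 := by
    intro q hqN
    have hq1 : 1 ≤ q := by omega
    rw [hDelta q hq1]
    apply Finset.sum_eq_zero
    intro r _
    apply hgvan
    calc N < q := hqN
      _ ≤ q * (r+1) := Nat.le_mul_of_pos_right _ (by omega)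
  have houter : (∑' q : ℕ, A q * ((DeltaFn w q m : ℝ) : ℂ))
      = ∑ q ∈ Finset.range (N+1), A q * ((DeltaFn w q m : ℝ) : ℂ) := by
    apply tsum_eq_sum
    intro q hq
    have : N < q := by simpa using hq
    rw [hDeltavan q this]
    simp
  rw [houter]
  -- drop q = 0
  have hIcc_sub : Finset.Icc 1 N ⊆ Finset.range (N+1) := by
    intro q hq
    simp only [Finset.mem_Icc] at hq
    simp only [Finset.mem_range]
    omega
  rw [← Finset.sum_subset hIcc_sub (by
    intro q hq hq'
    simp only [Finset.mem_range] at hq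
    simp only [Finset.mem_Icc] at hq'
    have : q = 0 := by omega
    subst this
    simp [hA])]
  -- expand Delta, products of sums
  have step1 : ∀ q ∈ Finset.Icc 1 N, A q * ((DeltaFn w q m : ℝ) : ℂ)
      = ∑ r ∈ Finset.range N, A q * ((g (q*(r+1)) : ℝ) : ℂ) := by
    intro q hq
    simp only [Finset.mem_Icc] at hq
    rw [hDelta q hq.1]
    push_cast
    rw [Finset.mul_sum]
  rw [Finset.sum_congr rfl step1]
  -- reindex r ↦ s = r+1
  have step2 : ∀ q ∈ Finset.Icc 1 N,
      (∑ r ∈ Finset.range N, A q * ((g (q*(r+1)) : ℝ) : ℂ))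
      = ∑ s ∈ Finset.Icc 1 N, A q * ((g (q*s) : ℝ) : ℂ) := by
    intro q _
    rw [← Finset.Ico_add_one_right_eq_Icc, Finset.sum_Ico_eq_sum_range]
    simp only [Nat.add_sub_cancel]
    exact Finset.sum_congr rfl (fun r _ => by rw [Nat.add_comm 1 r])
  rw [Finset.sum_congr rfl step2]
  rw [← Finset.sum_product']
  -- restrict to q*s ≤ N
  have hrestrict : ∑ p ∈ (Finset.Icc 1 N ×ˢ Finset.Icc 1 N), A p.1 * ((g (p.1*p.2) : ℝ) : ℂ)
      = ∑ p ∈ (Finset.Icc 1 N ×ˢ Finset.Icc 1 N).filter (fun p => p.1*p.2 ≤ N),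
          A p.1 * ((g (p.1*p.2) : ℝ) : ℂ) := by
    symm
    apply Finset.sum_subset (Finset.filter_subset _ _)
    intro p hp hp'
    have : ¬ (p.1 * p.2 ≤ N) := by
      intro h
      exact hp' (Finset.mem_filter.mpr ⟨hp, h⟩)
    rw [hgvan _ (by omega)]
    simp
  rw [hrestrict]
  -- reindex to sigma over divisors
  have hsig : ∑ p ∈ (Finset.Icc 1 N ×ˢ Finset.Icc 1 N).filter (fun p => p.1*p.2 ≤ N),
        A p.1 * ((g (p.1*p.2) : ℝ) : ℂ)
      = ∑ p ∈ (Finset.Icc 1 N).sigma (fun c => c.divisors), A p.2 * ((g p.1 : ℝ) : ℂ) := by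
    refine Finset.sum_nbij' (fun p => ⟨p.1*p.2, p.1⟩) (fun p => (p.2, p.1 / p.2)) ?_ ?_ ?_ ?_ ?_
    · rintro ⟨q, s⟩ hp
      simp only [Finset.mem_filter, Finset.mem_product, Finset.mem_Icc] at hp
      obtain ⟨⟨⟨hq1, hqN⟩, hs1, hsN⟩, hqs⟩ := hp
      simp only [Finset.mem_sigma, Finset.mem_Icc, Nat.mem_divisors]
      exact ⟨⟨Nat.one_le_iff_ne_zero.mpr (by positivity), hqs⟩, ⟨Dvd.intro s rfl, by positivity⟩⟩
    · rintro ⟨c, q⟩ hp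
      simp only [Finset.mem_sigma, Finset.mem_Icc, Nat.mem_divisors] at hp
      obtain ⟨⟨hc1, hcN⟩, hqc, hc0⟩ := hp
      have hq1 : 1 ≤ q := Nat.pos_of_ne_zero (fun h => hc0 (Nat.eq_zero_of_zero_dvd (h ▸ hqc)))
      have hqle : q ≤ c := Nat.le_of_dvd (by omega) hqc
      have hd1 : 1 ≤ c / q := Nat.one_le_iff_ne_zero.mpr (by
        intro h
        have := Nat.div_mul_cancel hqc
        rw [h] at this
        omega)
      have hdle : c / q ≤ c := Nat.div_le_self _ _
      simp only [Finset.mem_filter, Finset.mem_product, Finset.mem_Icc]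
      refine ⟨⟨⟨hq1, by omega⟩, hd1, by omega⟩, ?_⟩
      rw [Nat.mul_div_cancel' hqc]
      omega
    · rintro ⟨q, s⟩ hp
      simp only [Finset.mem_filter, Finset.mem_product, Finset.mem_Icc] at hp
      obtain ⟨⟨⟨hq1, -⟩, -⟩, -⟩ := hp
      show (q, q * s / q) = (q, s)
      rw [Nat.mul_div_cancel_left s (by omega)]
    · rintro ⟨c, q⟩ hp
      simp only [Finset.mem_sigma, Finset.mem_Icc, Nat.mem_divisors] at hp
      obtain ⟨-, hqc, -⟩ := hp
      show (⟨q * (c / q), q⟩ : Σ _ : ℕ, ℕ) = ⟨c, q⟩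
      exact Sigma.ext (Nat.mul_div_cancel' hqc) (heq_of_eq rfl)
    · rintro ⟨q, s⟩ _
      rfl
  rw [hsig, Finset.sum_sigma]
  -- evaluate divisor sums
  have heval : ∀ c ∈ Finset.Icc 1 N,
      (∑ q ∈ c.divisors, A q * ((g c : ℝ) : ℂ))
        = ((if (c:ℤ) ∣ m then (w c - w ((m:ℝ)/c)) else 0 : ℝ) : ℂ) := by
    intro c hc
    simp only [Finset.mem_Icc] at hc
    have hc0 : 0 < c := hc.1
    have hcR : (c:ℝ) ≠ 0 := by positivity
    rw [← Finset.sum_mul, hA]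
    rw [partition_full m c hc0, geom_full m c hc0]
    by_cases hdvd : (c:ℤ) ∣ m
    · rw [if_pos hdvd, if_pos hdvd, hg]
      have hcC : (c:ℂ) ≠ 0 := by exact_mod_cast hcR
      push_cast
      rw [mul_comm, div_mul_cancel₀ _ hcC]
    · rw [if_neg hdvd, if_neg hdvd]
      simp
  rw [Finset.sum_congr rfl heval, ← Complex.ofReal_sum]
  -- final case analysis
  by_cases hm : m = 0
  · subst hm
    rw [if_pos rfl]
    have hS : ∑ c ∈ Finset.Icc 1 N, (if ((c:ℤ) ∣ 0) then (w c - w (((0:ℤ):ℝ)/c)) else 0 : ℝ)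
        = ∑ c ∈ Finset.Icc 1 N, w c := by
      apply Finset.sum_congr rfl
      intro c _
      rw [if_pos (dvd_zero _)]
      norm_num [hw0]
    rw [hS]
    have h1 : (∑' q : ℕ, w q) = ∑ q ∈ Finset.range (N+1), w q := by
      apply tsum_eq_sum
      intro q hq
      have : N < q := by simpa using hq
      exact (hvan q (by exact_mod_cast this)).1
    have h2 : ∑ q ∈ Finset.range (N+1), w q = ∑ q ∈ Finset.Icc 1 N, w q := by
      symm
      apply Finset.sum_subset hIcc_sub
      intro q hq hq'
      simp only [Finset.mem_range] at hq
      simp only [Finset.mem_Icc] at hq'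
      have : q = 0 := by omega
      subst this
      simpa using hw0
    rw [← h2, ← h1, hsum]
    norm_num
  · rw [if_neg hm]
    set n : ℕ := m.natAbs with hn
    have hn0 : n ≠ 0 := Int.natAbs_ne_zero.mpr hm
    have hdvd_iff : ∀ c : ℕ, ((c:ℤ) ∣ m ↔ c ∣ n) := by
      intro c
      rw [hn, ← Int.natAbs_dvd_natAbs, Int.natAbs_natCast]
    have hS : ∑ c ∈ Finset.Icc 1 N, (if ((c:ℤ) ∣ m) then (w c - w ((m:ℝ)/c)) else 0 : ℝ) = 0 := by
      have hcond : ∀ c ∈ Finset.Icc 1 N,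
          (if ((c:ℤ) ∣ m) then (w c - w ((m:ℝ)/c)) else 0 : ℝ)
            = (if c ∣ n then (w c - w ((m:ℝ)/c)) else 0 : ℝ) := by
        intro c _
        exact if_congr (hdvd_iff c) rfl rfl
      rw [Finset.sum_congr rfl hcond, ← Finset.sum_filter]
      have hsub : (Finset.Icc 1 N).filter (fun c => c ∣ n) ⊆ n.divisors := by
        intro c hcmem
        simp only [Finset.mem_filter, Finset.mem_Icc] at hcmem
        exact Nat.mem_divisors.mpr ⟨hcmem.2, hn0⟩
      rw [Finset.sum_subset hsub (by
        intro c hcd hcf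
        have hc1 : 0 < c := Nat.pos_of_mem_divisors hcd
        simp only [Nat.mem_divisors] at hcd
        have hcN : N < c := by
          by_contra h
          exact hcf (Finset.mem_filter.mpr ⟨Finset.mem_Icc.mpr ⟨hc1, by omega⟩, hcd.1⟩)
        obtain ⟨e1, e2⟩ := hvan c (by exact_mod_cast hcN)
        rw [e1, e2]
        ring)]
      have hrw : ∀ c ∈ n.divisors, w ((m:ℝ)/c) = w (((n / c : ℕ) : ℝ)) := by
        intro c hcd
        have hc1 : 0 < c := Nat.pos_of_mem_divisors hcd
        have hc0 : (c:ℝ) ≠ 0 := by positivity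
        simp only [Nat.mem_divisors] at hcd
        have hnc : ((n / c : ℕ) : ℝ) = (n:ℝ)/c := Nat.cast_div hcd.1 hc0
        have habs : ((n:ℕ):ℝ) = |(m:ℝ)| := by
          rw [hn]
          rw [Nat.cast_natAbs, Int.cast_abs]
        rw [hnc, habs]
        rcases abs_choice ((m:ℝ)) with h | h
        · rw [h]
        · rw [h, neg_div, heven]
      have key : ∑ c ∈ n.divisors, (w c - w ((m:ℝ)/c)) =
          ∑ c ∈ n.divisors, w c - ∑ c ∈ n.divisors, w (((n / c : ℕ) : ℝ)) := by
        rw [← Finset.sum_sub_distrib]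
        exact Finset.sum_congr rfl (fun c hc => by rw [hrw c hc])
      rw [key, Nat.sum_div_divisors n (fun c => w c)]
      ring
    rw [hS]
    norm_num
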